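/- arXiv:1102.0958 — 2 statements merged into one kernel-verified Lean document; each statement's English description precedes it below -/
import Mathlib

section
/- For every x ∈ X and every p ∈ l_∞(T): dist(p; F^{−1}(x)) ≥ dist(ρ_p; F̃^{−1}(x)), where F^{−1}(x) = {q ∈ l_∞(T) : x ∈ F(q)}, F̃^{−1}(x) = {ρ ∈ l_∞(T̃) : x ∈ F̃(ρ)}, and dist(·; ∅) := +∞. -/
/-! By the Fenchel–Young inequality `⟨u*, x⟩ − f_t*(u*) ≤ f_t(x)`, every constraint of the
linearized system at `ρ_q` is implied by the constraint `f_t(x) ≤ q_t`, so `q ∈ F⁻¹(x)` gives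
`ρ_q ∈ F̃⁻¹(x)`; and `p ↦ ρ_p` is `1`-Lipschitz. -/

open Filter
open scoped ENNReal

noncomputable section

/-- The Banach space `l_∞(T)` of bounded real functions on `T` with sup norm. -/
abbrev Linf (T : Type*) : Type _ := lp (fun _ : T => ℝ) ∞

/-- The Dirac evaluation functional `δ_t ∈ l_∞(T)*`. -/
def dirac (T : Type*) (t : T) : Linf T →L[ℝ] ℝ :=
  LinearMap.mkContinuous
    { toFun := fun p => p t
      map_add' := fun p q => by simp [lp.coeFn_add]
      map_smul' := fun c p => by simp [lp.coeFn_smul] }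
    1 (fun p => by rw [one_mul]; exact lp.norm_apply_le_norm ENNReal.top_ne_zero p t)

variable {X : Type*} [NormedAddCommGroup X] [NormedSpace ℝ X]

/-- Fenchel conjugate of an extended-real-valued function. -/
def conj (g : X → EReal) (u : X →L[ℝ] ℝ) : EReal :=
  ⨆ x : X, (u x : EReal) - g x

/-- `dom g* = {u* : g*(u*) < +∞}`. -/
def domConj (g : X → EReal) : Set (X →L[ℝ] ℝ) := {u | conj g u < ⊤}

/-- `gph g* = {(u*, g*(u*)) : u* ∈ dom g*}`. -/
def gphConj (g : X → EReal) : Set ((X →L[ℝ] ℝ) × ℝ) :=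
  {q | conj g q.1 = (q.2 : EReal)}

/-- `epi g* = {(u*, γ) : g*(u*) ≤ γ}`. -/
def epiConj (g : X → EReal) : Set ((X →L[ℝ] ℝ) × ℝ) :=
  {q | conj g q.1 ≤ (q.2 : EReal)}

/-- A proper extended-real-valued function: never `⊥`, not identically `⊤`. -/
def ErealProper (g : X → EReal) : Prop := (∀ x, g x ≠ ⊥) ∧ ∃ x, g x ≠ ⊤

/-- Convexity of an extended-real-valued function. -/
def ErealConvexOn (g : X → EReal) : Prop :=
  ∀ x y : X, ∀ a b : ℝ, 0 ≤ a → 0 ≤ b → a + b = 1 →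
    g (a • x + b • y) ≤ (a : EReal) * g x + (b : EReal) * g y

variable {T : Type*}

/-- The feasible solution map `F(p) = {x : f_t(x) ≤ p_t ∀ t}`. -/
def feas (f : T → X → EReal) (p : Linf T) : Set X :=
  {x | ∀ t, f t x ≤ ((p t : ℝ) : EReal)}

/-- The graph of the feasible solution map. -/
def feasGraph (f : T → X → EReal) : Set (Linf T × X) :=
  {q | q.2 ∈ feas f q.1}

/-- Lipschitz-like (Aubin) property of a set-valued map (given by its graph `G`)
around `(z̄, ȳ) ∈ G` with modulus `ℓ`. -/
def LipLike {Z Y : Type*} [NormedAddCommGroup Z] [NormedAddCommGroup Y]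
    (G : Set (Z × Y)) (zb : Z) (yb : Y) (ℓ : ℝ) : Prop :=
  ∃ U ∈ nhds zb, ∃ V ∈ nhds yb, ∀ z ∈ U, ∀ u ∈ U, ∀ y ∈ V,
    (z, y) ∈ G → ∃ y', (u, y') ∈ G ∧ ‖y - y'‖ ≤ ℓ * ‖z - u‖

/-- The exact Lipschitzian bound `lip G(z̄, ȳ)` (value `∞` if the map is not
Lipschitz-like around `(z̄, ȳ)`). -/
def lipBound {Z Y : Type*} [NormedAddCommGroup Z] [NormedAddCommGroup Y]
    (G : Set (Z × Y)) (zb : Z) (yb : Y) : ℝ≥0∞ :=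
  sInf {c : ℝ≥0∞ | ∃ ℓ : ℝ, 0 ≤ ℓ ∧ LipLike G zb yb ℓ ∧ c = ENNReal.ofReal ℓ}

/-- Coderivative of a convex-graph map `G` at `(0, ȳ)`:
`z* ∈ D*G(0, ȳ)(y*)` iff `⟨z*, z⟩ − ⟨y*, y⟩ ≤ −⟨y*, ȳ⟩` for all `(z, y) ∈ G`. -/
def coderivMem {Z Y : Type*} [NormedAddCommGroup Z] [NormedSpace ℝ Z]
    [NormedAddCommGroup Y] [NormedSpace ℝ Y]
    (G : Set (Z × Y)) (yb : Y) (ys : Y →L[ℝ] ℝ) (zs : Z →L[ℝ] ℝ) : Prop :=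
  ∀ q ∈ G, zs q.1 - ys q.2 ≤ - ys yb

/-- The coderivative norm `‖D*G(0, ȳ)‖ = sup{‖z*‖ : z* ∈ D*G(0, ȳ)(y*), ‖y*‖ ≤ 1}`. -/
def coderivNorm {Z Y : Type*} [NormedAddCommGroup Z] [NormedSpace ℝ Z]
    [NormedAddCommGroup Y] [NormedSpace ℝ Y]
    (G : Set (Z × Y)) (yb : Y) : ℝ≥0∞ :=
  ⨆ zs ∈ {zs : Z →L[ℝ] ℝ | ∃ ys : Y →L[ℝ] ℝ, ‖ys‖ ≤ 1 ∧ coderivMem G yb ys zs},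
    (‖zs‖₊ : ℝ≥0∞)

/-- Weak* closure of a subset of `X* × ℝ`. -/
def wclosure2 (S : Set ((X →L[ℝ] ℝ) × ℝ)) : Set ((X →L[ℝ] ℝ) × ℝ) :=
  {q | ((StrongDual.toWeakDual q.1 : WeakDual ℝ X), q.2) ∈
    closure ((fun w : (X →L[ℝ] ℝ) × ℝ =>
      ((StrongDual.toWeakDual w.1 : WeakDual ℝ X), w.2)) '' S)}

/-- Weak* closure of a subset of `l_∞(T)* × X* × ℝ` (the dual of `l_∞(T) × X × ℝ`). -/
def wclosure3 (S : Set ((Linf T →L[ℝ] ℝ) × ((X →L[ℝ] ℝ) × ℝ))) :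
    Set ((Linf T →L[ℝ] ℝ) × ((X →L[ℝ] ℝ) × ℝ)) :=
  {q | ((StrongDual.toWeakDual q.1 : WeakDual ℝ (Linf T)),
        ((StrongDual.toWeakDual q.2.1 : WeakDual ℝ X), q.2.2)) ∈
    closure ((fun w : (Linf T →L[ℝ] ℝ) × ((X →L[ℝ] ℝ) × ℝ) =>
      ((StrongDual.toWeakDual w.1 : WeakDual ℝ (Linf T)),
        ((StrongDual.toWeakDual w.2.1 : WeakDual ℝ X), w.2.2))) '' S)}

/-- Convex conic hull. -/
def coneHull {V : Type*} [AddCommMonoid V] [Module ℝ V] (S : Set V) : Set V :=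
  {x | ∃ r : ℝ, 0 ≤ r ∧ ∃ y ∈ convexHull ℝ S, x = r • y}

/-- `C(p) = co(⋃ₜ gph (f_t − p_t)*)`. -/
def Cset (f : T → X → EReal) (p : Linf T) : Set ((X →L[ℝ] ℝ) × ℝ) :=
  convexHull ℝ (⋃ t : T, gphConj (fun x => f t x - ((p t : ℝ) : EReal)))

/-- `H(p) = co(⋃ₜ epi (f_t − p_t)*)`. -/
def Hset (f : T → X → EReal) (p : Linf T) : Set ((X →L[ℝ] ℝ) × ℝ) :=
  convexHull ℝ (⋃ t : T, epiConj (fun x => f t x - ((p t : ℝ) : EReal)))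

/-- Strong Slater condition for `σ(p)`. -/
def SSC (f : T → X → EReal) (p : Linf T) : Prop :=
  ∃ xh : X, (⨆ t : T, (f t xh - ((p t : ℝ) : EReal))) < 0

/-- `x̂` is a strong Slater point for `σ(0)`. -/
def StrongSlaterPt (f : T → X → EReal) (xh : X) : Prop :=
  (⨆ t : T, f t xh) < 0


variable {X : Type*} [NormedAddCommGroup X] [NormedSpace ℝ X] {T : Type*}

/-- The index set `T̃ = {(t, u*) : u* ∈ dom f_t*}` of the linearized system. -/
def Ttilde (f : T → X → EReal) : Type _ :=
  {s : T × (X →L[ℝ] ℝ) // s.2 ∈ domConj (f s.1)}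

/-- The linearized feasible solution map `F̃(ρ)`. -/
def feasTilde (f : T → X → EReal) (ρ : Linf (Ttilde f)) : Set X :=
  {x | ∀ s : Ttilde f, ((s.1.2 x : ℝ) : EReal) - conj (f s.1.1) s.1.2 ≤ ((ρ s : ℝ) : EReal)}

/-- The embedding `p ↦ ρ_p`, `ρ_p(t, u*) = p_t`. -/
def rhoP (f : T → X → EReal) (p : Linf T) : Linf (Ttilde f) :=
  ⟨fun s => p s.1.1, memℓp_infty
    ⟨‖p‖, by rintro r ⟨s, rfl⟩; exact lp.norm_apply_le_norm ENNReal.top_ne_zero p s.1.1⟩⟩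

/-- The subdifferential of convex analysis of `g` at `x`. -/
def subdiff (g : X → EReal) (x : X) : Set (X →L[ℝ] ℝ) :=
  {u | ∀ y, ((u y - u x : ℝ) : EReal) ≤ g y - g x}

end

theorem EReal.coe_sub_le_comm {a : ℝ} {b c : EReal} :
    (a : EReal) - b ≤ c ↔ (a : EReal) - c ≤ b := by
  induction b <;> induction c <;> simp [← EReal.coe_sub]
  constructor <;> intro <;> linarith

section

variable {X : Type*} [NormedAddCommGroup X] [NormedSpace ℝ X]

theorem coe_apply_sub_conj_le (g : X → EReal) (u : X →L[ℝ] ℝ) (x : X) :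
    ((u x : ℝ) : EReal) - conj g u ≤ g x :=
  EReal.coe_sub_le_comm.1 (le_iSup (fun y => ((u y : ℝ) : EReal) - g y) x)

variable {T : Type*} {f : T → X → EReal}

theorem rhoP_mem_feasTilde {x : X} {p : Linf T} (hx : x ∈ feas f p) :
    x ∈ feasTilde f (rhoP f p) :=
  fun s => (coe_apply_sub_conj_le _ _ x).trans (hx s.1.1)

variable (f) in
theorem lipschitzWith_rhoP : LipschitzWith 1 (rhoP f) := by
  refine LipschitzWith.of_dist_le_mul fun p q => ?_
  rw [NNReal.coe_one, one_mul, dist_eq_norm, dist_eq_norm]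
  refine lp.norm_le_of_forall_le (norm_nonneg _) fun s => ?_
  exact lp.norm_apply_le_norm ENNReal.top_ne_zero (p - q) s.1.1

end

theorem stmt_15_general {T : Type*}
    {X : Type*} [NormedAddCommGroup X] [NormedSpace ℝ X]
    (f : T → X → EReal)
    (x : X) (p : Linf T) :
    EMetric.infEdist (rhoP f p) {ρ : Linf (Ttilde f) | x ∈ feasTilde f ρ} ≤
      EMetric.infEdist p {q : Linf T | x ∈ feas f q} :=
  Metric.le_infEDist.2 fun q hq => calc
    Metric.infEDist (rhoP f p) {ρ | x ∈ feasTilde f ρ} ≤ edist (rhoP f p) (rhoP f q) :=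
      Metric.infEDist_le_edist_of_mem (rhoP_mem_feasTilde hq)
    _ ≤ edist p q := by simpa using (lipschitzWith_rhoP f).edist_le_mul p q

theorem stmt_15 {T : Type*} [Nonempty T]
    {X : Type*} [NormedAddCommGroup X] [NormedSpace ℝ X] [CompleteSpace X]
    (f : T → X → EReal)
    (hproper : ∀ t, ErealProper (f t))
    (hlsc : ∀ t, LowerSemicontinuous (f t))
    (hconv : ∀ t, ErealConvexOn (f t))
    (x : X) (p : Linf T) :
    EMetric.infEdist (rhoP f p) {ρ : Linf (Ttilde f) | x ∈ feasTilde f ρ} ≤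
      EMetric.infEdist p {q : Linf T | x ∈ feas f q} :=
  stmt_15_general f x p
end

section
/- For every p ∈ l_∞(T): F(p) = { x ∈ X : ⟨u*, x⟩ − f_t*(u*) ≤ p_t for all t ∈ T and all u* ∈ rge ∂f_t }, where ∂f_t(x) = { u* ∈ X* : ⟨u*, y − x⟩ ≤ f_t(y) − f_t(x) for all y ∈ X } is the subdifferential of convex analysis and rge ∂f_t = ⋃_{x∈X} ∂f_t(x); that is, in the linearization of the convex system σ(p) the index set dom f_t* may be replaced by the range of the subdifferential of f_t. -/
open Filter
open scoped ENNReal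

/-!
If `p_t < f_t(x)`, separating `(x, p_t)` from the closed convex epigraph of `f_t` (Fenchel–Moreau)
gives `u₀` with `p_t < u₀ x - f_t*(u₀)`. Choosing `z` with `u₀ z - f_t(z)` within `ε` of
`f_t*(u₀)` makes `u₀` an `ε`-subgradient at `z`, and the Brøndsted–Rockafellar theorem (Ekeland's
principle for `f_t - u₀`, then a Hahn–Banach sandwich) replaces it by an exact subgradient `u` at
a nearby point with `‖u - u₀‖` small, so that `u x - f_t*(u)` still exceeds `p_t`. The other
inclusion is the Fenchel–Young inequality.
-/

lemma EReal.coe_sub_le_coe_iff {a b : ℝ} {e : EReal} :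
    (a : EReal) - e ≤ b ↔ ((a - b : ℝ) : EReal) ≤ e := by
  induction e with
  | bot => simp [-EReal.coe_sub]
  | coe e => norm_cast; constructor <;> intro h <;> linarith
  | top => simp

lemma EReal.coe_le_iff_forall_le_coe {a : ℝ} {e : EReal} :
    (a : EReal) ≤ e ↔ ∀ r : ℝ, e ≤ r → a ≤ r := by
  refine ⟨fun h r hr => by exact_mod_cast h.trans hr, fun h => ?_⟩
  exact EReal.le_of_forall_lt_iff_le.1 fun r hr => by exact_mod_cast h r hr.le

def epigraph {X : Type*} (g : X → EReal) : Set (X × ℝ) := {q | g q.1 ≤ q.2}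

section Conjugate

variable {X : Type*} [NormedAddCommGroup X] [NormedSpace ℝ X] {g : X → EReal}
  {u : X →L[ℝ] ℝ}

lemma coe_sub_le_conj (g : X → EReal) (u : X →L[ℝ] ℝ) (y : X) :
    (u y : EReal) - g y ≤ conj g u :=
  le_iSup (fun y => (u y : EReal) - g y) y

lemma conj_le_coe_iff {α : ℝ} : conj g u ≤ α ↔ ∀ y, ((u y - α : ℝ) : EReal) ≤ g y := by
  simp only [conj, iSup_le_iff, EReal.coe_sub_le_coe_iff]

lemma conj_le_coe_iff_forall_epigraph {α : ℝ} :
    conj g u ≤ α ↔ ∀ q ∈ epigraph g, u q.1 - q.2 ≤ α := by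
  simp only [conj_le_coe_iff, EReal.coe_le_iff_forall_le_coe, epigraph, Set.mem_ofPred_eq,
    Prod.forall]
  exact forall_congr' fun y => forall_congr' fun r => imp_congr_right fun _ => by
    constructor <;> intro h <;> linarith

theorem coe_sub_conj_le (g : X → EReal) (u : X →L[ℝ] ℝ) (x : X) :
    (u x : EReal) - conj g u ≤ g x := by
  induction hx : g x with
  | bot =>
    have : conj g u = ⊤ := by simpa [hx] using coe_sub_le_conj g u x
    simp [this]
  | coe r =>
    rw [EReal.coe_sub_le_coe_iff, EReal.coe_sub, ← hx]
    exact coe_sub_le_conj g u x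
  | top => exact le_top

lemma conj_ne_bot (hg : ∃ x, g x ≠ ⊤) : conj g u ≠ ⊥ := by
  obtain ⟨x, hx⟩ := hg
  refine ne_bot_of_le_ne_bot ?_ (coe_sub_le_conj g u x)
  induction hgx : g x with
  | bot => simp
  | coe r => simp [← EReal.coe_sub]
  | top => exact absurd hgx hx

lemma exists_lt_coe_sub_of_lt_conj (hbot : ∀ y, g y ≠ ⊥) {r : ℝ} (hr : (r : EReal) < conj g u) :
    ∃ z, ∃ gz : ℝ, g z = gz ∧ r < u z - gz := by
  obtain ⟨z, hz⟩ := lt_iSup_iff.1 hr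
  induction hgz : g z with
  | bot => exact absurd hgz (hbot z)
  | coe gz => exact ⟨z, gz, hgz, by rw [hgz] at hz; exact_mod_cast hz⟩
  | top => simp [hgz] at hz

lemma exists_eq_coe_of_mem_subdiff {z : X} (hu : u ∈ subdiff g z) : ∃ gz : ℝ, g z = gz := by
  have := hu z
  induction hgz : g z with
  | bot => simp [hgz] at this
  | coe gz => exact ⟨gz, rfl⟩
  | top => simp [hgz] at this

lemma mem_subdiff_iff_conj_le {z : X} {gz : ℝ} (hgz : g z = gz) :
    u ∈ subdiff g z ↔ conj g u ≤ ((u z - gz : ℝ) : EReal) := by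
  simp only [subdiff, conj_le_coe_iff, hgz, Set.mem_ofPred_eq]
  refine forall_congr' fun y => ?_
  rw [EReal.le_sub_iff_add_le (.inl (EReal.coe_ne_bot _)) (.inl (EReal.coe_ne_top _)),
    ← EReal.coe_add]
  ring_nf

end Conjugate

section Separation

variable {X : Type*} [NormedAddCommGroup X] [NormedSpace ℝ X] {g : X → EReal}

lemma ContinuousLinearMap.exists_apply_prod_eq (f : X × ℝ →L[ℝ] ℝ) :
    ∃ (v : X →L[ℝ] ℝ) (s : ℝ), ∀ y r, f (y, r) = v y + s * r := by
  refine ⟨f.comp (.inl ℝ X ℝ), f (0, 1), fun y r => ?_⟩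
  rw [← f.comp_inl_add_comp_inr, mul_comm, ← smul_eq_mul, ← map_smul]
  simp

lemma convex_epigraph (hconv : ErealConvexOn g) : Convex ℝ (epigraph g) := by
  intro q₁ h₁ q₂ h₂ a b ha hb hab
  calc g (a • q₁.1 + b • q₂.1) ≤ (a : EReal) * g q₁.1 + (b : EReal) * g q₂.1 :=
        hconv _ _ a b ha hb hab
    _ ≤ (a : EReal) * q₁.2 + (b : EReal) * q₂.2 := by
        gcongr
        exacts [h₁, h₂]
    _ = ((a • q₁ + b • q₂).2 : ℝ) := by simp

omit [NormedSpace ℝ X] in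
lemma isClosed_epigraph (hlsc : LowerSemicontinuous g) : IsClosed (epigraph g) :=
  hlsc.isClosed_epigraph.preimage
    (continuous_fst.prodMk (continuous_coe_real_ereal.comp continuous_snd))

variable {v : X →L[ℝ] ℝ} {s β : ℝ}

lemma exists_separation_epigraph (hconv : ErealConvexOn g) (hlsc : LowerSemicontinuous g)
    {x : X} {c : ℝ} (hcx : (c : EReal) < g x) :
    ∃ (v : X →L[ℝ] ℝ) (s β : ℝ), (∀ q ∈ epigraph g, v q.1 - s * q.2 < β) ∧ β < v x - s * c := by
  obtain ⟨f, β, hf, hfx⟩ := geometric_hahn_banach_closed_point (convex_epigraph hconv)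
    (isClosed_epigraph hlsc) (x := (x, c)) (not_le.2 hcx)
  obtain ⟨v, s, hvs⟩ := f.exists_apply_prod_eq
  refine ⟨v, -s, β, fun q hq => ?_, ?_⟩
  · simpa [hvs] using hf q hq
  · simpa [hvs] using hfx

lemma nonneg_of_separation_epigraph (hsep : ∀ q ∈ epigraph g, v q.1 - s * q.2 < β)
    {q₀ : X × ℝ} (hq₀ : q₀ ∈ epigraph g) : 0 ≤ s := by
  by_contra! hs
  set t := max 0 ((β - v q₀.1 + s * q₀.2) / -s)
  have hq : (q₀.1, q₀.2 + t) ∈ epigraph g :=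
    hq₀.trans (EReal.coe_le_coe_iff.2 (le_add_of_nonneg_right (le_max_left _ _)))
  have ht : β - v q₀.1 + s * q₀.2 ≤ -s * t := by
    rw [← div_le_iff₀' (neg_pos.2 hs)]
    exact le_max_right _ _
  have := hsep _ hq
  linarith

lemma conj_inv_smul_le_of_separation (hs : 0 < s)
    (hsep : ∀ q ∈ epigraph g, v q.1 - s * q.2 < β) :
    conj g (s⁻¹ • v) ≤ ((s⁻¹ * β : ℝ) : EReal) := by
  refine conj_le_coe_iff_forall_epigraph.2 fun q hq => ?_
  have := hsep q hq
  simp only [smul_apply, smul_eq_mul]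
  rw [← mul_le_mul_iff_right₀ hs]
  field_simp
  linarith

omit [NormedAddCommGroup X] [NormedSpace ℝ X] in
lemma exists_eq_coe_of_proper (hproper : ErealProper g) : ∃ x₀, ∃ r₀ : ℝ, g x₀ = r₀ := by
  obtain ⟨hbot, x₀, hx₀⟩ := hproper
  exact ⟨x₀, _, (EReal.coe_toReal hx₀ (hbot x₀)).symm⟩

theorem exists_conj_le_coe (hproper : ErealProper g) (hlsc : LowerSemicontinuous g)
    (hconv : ErealConvexOn g) : ∃ (u : X →L[ℝ] ℝ) (α : ℝ), conj g u ≤ α := by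
  obtain ⟨x₀, r₀, hr₀⟩ := exists_eq_coe_of_proper hproper
  obtain ⟨v, s, β, hsep, hx⟩ := exists_separation_epigraph hconv hlsc (x := x₀) (c := r₀ - 1)
    (by rw [hr₀]; exact_mod_cast sub_one_lt r₀)
  have hs : 0 < s := by
    have := hsep (x₀, r₀) hr₀.le
    linarith
  exact ⟨_, _, conj_inv_smul_le_of_separation hs hsep⟩

theorem exists_conj_le_coe_lt (hproper : ErealProper g) (hlsc : LowerSemicontinuous g)
    (hconv : ErealConvexOn g) {x : X} {c : ℝ} (hcx : (c : EReal) < g x) :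
    ∃ (u : X →L[ℝ] ℝ) (α : ℝ), conj g u ≤ α ∧ c < u x - α := by
  obtain ⟨v, s, β, hsep, hx⟩ := exists_separation_epigraph hconv hlsc hcx
  obtain ⟨x₀, r₀, hr₀⟩ := exists_eq_coe_of_proper hproper
  rcases (nonneg_of_separation_epigraph hsep (q₀ := (x₀, r₀)) hr₀.le).lt_or_eq with hs | rfl
  · refine ⟨_, _, conj_inv_smul_le_of_separation hs hsep, ?_⟩
    simp only [smul_apply, smul_eq_mul]
    rw [← mul_lt_mul_iff_right₀ hs]
    field_simp
    linarith
  -- A vertical separating hyperplane is tilted by an affine minorant.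
  obtain ⟨u₁, α₁, hu₁⟩ := exists_conj_le_coe hproper hlsc hconv
  simp only [zero_mul, sub_zero] at hsep hx
  set l := (|c + α₁ - u₁ x| + 1) / (v x - β)
  have hl : l * (v x - β) = |c + α₁ - u₁ x| + 1 := div_mul_cancel₀ _ (by linarith)
  have hl₀ : 0 ≤ l := div_nonneg (by positivity) (by linarith)
  refine ⟨u₁ + l • v, α₁ + l * β, conj_le_coe_iff_forall_epigraph.2 fun q hq => ?_, ?_⟩
  · have := conj_le_coe_iff_forall_epigraph.1 hu₁ q hq
    simp only [add_apply, smul_apply, smul_eq_mul]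
    nlinarith [hsep q hq]
  · simp only [add_apply, smul_apply, smul_eq_mul]
    linarith [le_abs_self (c + α₁ - u₁ x)]

end Separation

section Ekeland

variable {W : Type*} [MetricSpace W] {κ : ℝ}

def ekelandSet (h : W → ℝ) (κ : ℝ) (a : W) : Set W := {y | h y + κ * dist y a ≤ h a}

section EkelandSet

variable {h : W → ℝ}

lemma self_mem_ekelandSet (a : W) : a ∈ ekelandSet h κ a := by simp [ekelandSet]

lemma le_of_mem_ekelandSet (hκ : 0 ≤ κ) {a y : W} (hy : y ∈ ekelandSet h κ a) : h y ≤ h a := by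
  have : 0 ≤ κ * dist y a := by positivity
  exact le_of_add_le_of_nonneg_left hy this

lemma ekelandSet_subset (hκ : 0 ≤ κ) {a b : W} (hb : b ∈ ekelandSet h κ a) :
    ekelandSet h κ b ⊆ ekelandSet h κ a := fun y hy => by
  simp only [ekelandSet, Set.mem_ofPred_eq] at *
  nlinarith [dist_triangle y b a]

lemma isClosed_ekelandSet (hlsc : LowerSemicontinuous h) (a : W) :
    IsClosed (ekelandSet h κ a) :=
  (hlsc.add (continuous_const.mul (continuous_id.dist continuous_const)).lowerSemicontinuous
    ).isClosed_preimage (h a)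

lemma exists_seq_ekelandSet (hbdd : BddBelow (Set.range h)) (z : W) :
    ∃ a : ℕ → W, a 0 = z ∧ (∀ n, a (n + 1) ∈ ekelandSet h κ (a n)) ∧
      ∀ n, ∀ y ∈ ekelandSet h κ (a n), h (a (n + 1)) ≤ h y + (1 / 2) ^ n := by
  have step (n : ℕ) (a : W) :
      ∃ b ∈ ekelandSet h κ a, ∀ y ∈ ekelandSet h κ a, h b ≤ h y + (1 / 2) ^ n := by
    have hne : (h '' ekelandSet h κ a).Nonempty := ⟨h a, a, self_mem_ekelandSet a, rfl⟩
    obtain ⟨_, ⟨b, hb, rfl⟩, hbinf⟩ := exists_lt_of_csInf_lt hne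
      (lt_add_of_pos_right _ (pow_pos (one_half_pos (α := ℝ)) n))
    refine ⟨b, hb, fun y hy => ?_⟩
    have := csInf_le (hbdd.mono (Set.image_subset_range h _)) ⟨y, hy, rfl⟩
    linarith
  choose next hnext_mem hnext_le using step
  exact ⟨fun n => Nat.rec z (fun n b => next n b) n, rfl, fun n => hnext_mem n _,
    fun n => hnext_le n _⟩

end EkelandSet

theorem ekeland_variational_principle [CompleteSpace W] {h : W → ℝ}
    (hlsc : LowerSemicontinuous h) (hbdd : BddBelow (Set.range h)) (hκ : 0 < κ) (z : W) :
    ∃ z', h z' + κ * dist z' z ≤ h z ∧ ∀ y, h z' ≤ h y + κ * dist y z' := by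
  obtain ⟨a, ha₀, ha_mem, ha_le⟩ := exists_seq_ekelandSet (κ := κ) hbdd z
  have hmono {n k : ℕ} (hnk : n ≤ k) : a k ∈ ekelandSet h κ (a n) := by
    induction k, hnk using Nat.le_induction with
    | base => exact self_mem_ekelandSet _
    | succ k _ ih => exact ekelandSet_subset hκ.le ih (ha_mem k)
  have hdist (n : ℕ) : dist (a (n + 1)) (a (n + 1 + 1)) ≤ κ⁻¹ * (1 / 2) ^ n := by
    have h₁ := ha_le n (a (n + 2)) (hmono (by omega : n ≤ n + 2))
    have h₂ : a (n + 2) ∈ ekelandSet h κ (a (n + 1)) := ha_mem (n + 1)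
    simp only [ekelandSet, Set.mem_ofPred_eq] at h₂
    rw [dist_comm, le_inv_mul_iff₀ hκ]
    linarith
  obtain ⟨z', hz'⟩ := cauchySeq_tendsto_of_complete
    (cauchySeq_of_le_geometric _ _ one_half_lt_one hdist)
  have hz'a (n : ℕ) : z' ∈ ekelandSet h κ (a n) := (isClosed_ekelandSet hlsc _).mem_of_tendsto hz'
    (eventually_atTop.2 ⟨n, fun k hk => hmono (by omega : n ≤ k + 1)⟩)
  refine ⟨z', ha₀ ▸ hz'a 0, fun y => ?_⟩
  by_cases hy : y ∈ ekelandSet h κ z'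
  · have hle (n : ℕ) : h z' ≤ h y + (1 / 2) ^ n :=
      (le_of_mem_ekelandSet hκ.le (hz'a (n + 1))).trans
        (ha_le n y (ekelandSet_subset hκ.le (hz'a n) hy))
    have : h z' ≤ h y := ge_of_tendsto'
      (by simpa using tendsto_const_nhds.add (tendsto_pow_atTop_nhds_zero_of_lt_one
        (by norm_num : (0 : ℝ) ≤ 1 / 2) one_half_lt_one)) hle
    nlinarith [dist_nonneg (x := y) (y := z')]
  · simp only [ekelandSet, Set.mem_ofPred_eq, not_le] at hy
    exact hy.le

theorem ekeland_variational_principle_ereal [CompleteSpace W] {h : W → EReal}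
    (hlsc : LowerSemicontinuous h) {m : ℝ} (hm : ∀ y, (m : EReal) ≤ h y) (hκ : 0 < κ) {z : W}
    {c : ℝ} (hz : h z = c) :
    ∃ z', ∃ b : ℝ, h z' = b ∧ b + κ * dist z' z ≤ c ∧
      ∀ y, ((b - κ * dist y z' : ℝ) : EReal) ≤ h y := by
  -- truncating `h` at the level `h z` makes it real-valued and keeps the conclusion intact
  have hmc : (m : EReal) ≤ c := hz ▸ hm z
  set ht : W → ℝ := fun y => (min (h y) c).toReal
  have hht (y : W) : (ht y : EReal) = min (h y) c :=
    EReal.coe_toReal (ne_top_of_le_ne_top (EReal.coe_ne_top c) (min_le_right _ _))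
      (ne_bot_of_le_ne_bot (EReal.coe_ne_bot m) (le_min (hm y) hmc))
  have hlsc' : LowerSemicontinuous ht := lowerSemicontinuous_iff_isClosed_preimage.2 fun r => by
    convert (hlsc.inf (lowerSemicontinuous_const (z := (c : EReal)))).isClosed_preimage
      (r : EReal) using 1
    ext y
    exact EReal.coe_le_coe_iff.symm.trans (by rw [hht]; rfl)
  have hbdd : BddBelow (Set.range ht) := ⟨m, by
    rintro _ ⟨y, rfl⟩
    exact EReal.coe_le_coe_iff.1 (hht y ▸ le_min (hm y) hmc)⟩
  obtain ⟨z', hz'z, hz'min⟩ := ekeland_variational_principle hlsc' hbdd hκ z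
  have htz : ht z = c := by
    have := hht z
    rwa [hz, min_self, EReal.coe_eq_coe_iff] at this
  have hz' : h z' = ht z' := by
    rw [hht]
    refine (min_eq_left ?_).symm
    by_contra! hlt
    have : ht z' = c := by exact_mod_cast (hht z').trans (min_eq_right hlt.le)
    have : z' = z := dist_le_zero.1 (by nlinarith [dist_nonneg (x := z') (y := z)])
    exact (hz ▸ this ▸ hlt).false
  refine ⟨z', ht z', hz', htz ▸ hz'z, fun y => ?_⟩
  calc ((ht z' - κ * dist y z' : ℝ) : EReal) ≤ ht y :=
        EReal.coe_le_coe_iff.2 (by linarith [hz'min y])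
    _ = min (h y) c := hht y
    _ ≤ h y := min_le_left _ _

end Ekeland

section Subdifferential

variable {X : Type*} [NormedAddCommGroup X] [NormedSpace ℝ X] {g : X → EReal}

lemma ContinuousLinearMap.norm_le_of_forall_apply_le {w : X →L[ℝ] ℝ} {κ : ℝ} (hκ : 0 ≤ κ)
    (h : ∀ d, w d ≤ κ * ‖d‖) : ‖w‖ ≤ κ :=
  w.opNorm_le_bound hκ fun d => abs_le.2
    ⟨by simpa using neg_le_neg (h (-d)), h d⟩

lemma concaveOn_add_apply_sub_sub_mul_norm (u₀ : X →L[ℝ] ℝ) (z : X) (c : ℝ) {κ : ℝ}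
    (hκ : 0 ≤ κ) : ConcaveOn ℝ Set.univ fun y => c + u₀ (y - z) - κ * ‖y - z‖ := by
  have haff : ConcaveOn ℝ Set.univ fun y => c + u₀ (y - z) :=
    (((u₀ : X →ₗ[ℝ] ℝ).concaveOn convex_univ).add_const (c - u₀ z)).congr fun y _ => by
      simp only [Pi.add_apply, ContinuousLinearMap.coe_coe, map_sub]
      ring
  have hnorm : ConvexOn ℝ Set.univ fun y : X => κ * ‖y - z‖ := by
    simpa [sub_eq_add_neg, Function.comp_def] using
      (convexOn_univ_norm.translate_left (-z)).smul hκ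
  exact haff.sub hnorm

/-- The subgradient is produced by separating the epigraph of `g` from the open hypograph of the
concave minorant. -/
lemma exists_mem_subdiff_of_forall_le (hconv : ErealConvexOn g) {κ : ℝ} (hκ : 0 ≤ κ)
    (u₀ : X →L[ℝ] ℝ) {z : X} {gz : ℝ} (hgz : g z = gz)
    (hle : ∀ y, ((gz + u₀ (y - z) - κ * ‖y - z‖ : ℝ) : EReal) ≤ g y) :
    ∃ w : X →L[ℝ] ℝ, ‖w‖ ≤ κ ∧ u₀ - w ∈ subdiff g z := by
  set φ : X → ℝ := fun y => gz + u₀ (y - z) - κ * ‖y - z‖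
  have hφ : Continuous φ := by fun_prop
  set O : Set (X × ℝ) := {q | q.1 ∈ Set.univ ∧ q.2 < φ q.1}
  have hO : IsOpen O := by
    simpa [O] using isOpen_lt continuous_snd (hφ.comp continuous_fst)
  have hdisj : Disjoint O (epigraph g) := Set.disjoint_left.2 fun q hqO hqE =>
    hqO.2.not_ge (EReal.coe_le_coe_iff.1 ((hle q.1).trans hqE))
  obtain ⟨f, β, hfO, hfE⟩ := geometric_hahn_banach_open
    (concaveOn_add_apply_sub_sub_mul_norm u₀ z gz hκ).convex_strict_hypograph hO
    (convex_epigraph hconv) hdisj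
  obtain ⟨v, s, hf⟩ := f.exists_apply_prod_eq
  have hvO (y : X) (r : ℝ) (hr : r < φ y) : v y + s * r < β := hf y r ▸ hfO (y, r) ⟨trivial, hr⟩
  have hvE (q : X × ℝ) (hq : q ∈ epigraph g) : β ≤ v q.1 + s * q.2 := hf q.1 q.2 ▸ hfE q hq
  have hφz : φ z = gz := by simp [φ]
  have hs : 0 < s := by
    linarith [hvO z (gz - 1) (by linarith), hvE (z, gz) hgz.le]
  have hvφ (y : X) : v y + s * φ y ≤ β := le_of_forall_pos_lt_add fun δ hδ => by
    have := hvO y (φ y - δ / s) (by linarith [div_pos hδ hs])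
    rwa [mul_sub, mul_div_cancel₀ _ hs.ne', ← add_sub_assoc, sub_lt_iff_lt_add] at this
  have hβ : v z + s * gz = β := le_antisymm (hφz ▸ hvφ z) (hvE (z, gz) hgz.le)
  refine ⟨u₀ + s⁻¹ • v, ContinuousLinearMap.norm_le_of_forall_apply_le hκ fun d => ?_, ?_⟩
  · have := hvφ (z + d)
    simp only [φ, add_sub_cancel_left, map_add] at this
    simp only [add_apply, smul_apply, smul_eq_mul]
    rw [← mul_le_mul_iff_right₀ hs]
    field_simp
    nlinarith
  · rw [mem_subdiff_iff_conj_le hgz, conj_le_coe_iff_forall_epigraph]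
    intro q hq
    have := hvE q hq
    simp only [sub_apply, add_apply, smul_apply, smul_eq_mul]
    rw [← mul_le_mul_iff_right₀ hs]
    field_simp
    nlinarith

end Subdifferential

section BrondstedRockafellar

variable {X : Type*} [NormedAddCommGroup X] [NormedSpace ℝ X] [CompleteSpace X] {g : X → EReal}

/-- The Brøndsted–Rockafellar theorem; `hε` says that `u₀` is an `ε`-subgradient of `g` at `z`. -/
theorem exists_mem_subdiff_near (hlsc : LowerSemicontinuous g) (hconv : ErealConvexOn g)
    (u₀ : X →L[ℝ] ℝ) {z : X} {gz ε κ : ℝ} (hgz : g z = gz) (hκ : 0 < κ)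
    (hε : conj g u₀ ≤ ((u₀ z - gz + ε : ℝ) : EReal)) :
    ∃ z', ∃ w : X →L[ℝ] ℝ, ‖w‖ ≤ κ ∧ u₀ - w ∈ subdiff g z' ∧ κ * ‖z' - z‖ ≤ ε := by
  set h : X → EReal := fun y => g y + ((-u₀ y : ℝ) : EReal)
  have hh (y : X) : h y = g y - (u₀ y : EReal) := by simp [h, sub_eq_add_neg]
  have hlsc_h : LowerSemicontinuous h :=
    hlsc.add' (continuous_coe_real_ereal.comp (by fun_prop)).lowerSemicontinuous
      fun y => EReal.continuousAt_add (.inr (EReal.coe_ne_bot _)) (.inr (EReal.coe_ne_top _))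
  have hm (y : X) : ((-(u₀ z - gz + ε) : ℝ) : EReal) ≤ h y := by
    rw [hh, EReal.le_sub_iff_add_le (.inl (EReal.coe_ne_bot _)) (.inl (EReal.coe_ne_top _)),
      ← EReal.coe_add]
    exact (conj_le_coe_iff.1 hε y).trans_eq' (by ring_nf)
  obtain ⟨z', b, hz', hbz, hbmin⟩ := ekeland_variational_principle_ereal hlsc_h hm hκ
    (z := z) (c := gz - u₀ z) (by rw [hh, hgz, EReal.coe_sub])
  have hgz' : g z' = ((b + u₀ z' : ℝ) : EReal) := by
    rw [EReal.coe_add, ← hz', hh, EReal.sub_add_cancel]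
  obtain ⟨w, hw, hsub⟩ := exists_mem_subdiff_of_forall_le hconv hκ.le u₀ hgz' fun y => by
    have := hbmin y
    rw [hh, EReal.le_sub_iff_add_le (.inl (EReal.coe_ne_bot _)) (.inl (EReal.coe_ne_top _)),
      ← EReal.coe_add] at this
    refine this.trans_eq' ?_
    rw [map_sub, dist_eq_norm]
    ring_nf
  refine ⟨z', w, hw, hsub, ?_⟩
  have := hm z'
  rw [hz', EReal.coe_le_coe_iff] at this
  rw [← dist_eq_norm]
  linarith

end BrondstedRockafellar

section Linearization

variable {X : Type*} [NormedAddCommGroup X] [NormedSpace ℝ X] [CompleteSpace X] {g : X → EReal}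

theorem le_coe_of_forall_mem_range_subdiff (hproper : ErealProper g)
    (hlsc : LowerSemicontinuous g) (hconv : ErealConvexOn g) {x : X} {c : ℝ}
    (hx : ∀ u ∈ ⋃ y : X, subdiff g y, (u x : EReal) - conj g u ≤ c) : g x ≤ c := by
  by_contra! hgx
  obtain ⟨u₀, α, hα, hcα⟩ := exists_conj_le_coe_lt hproper hlsc hconv hgx
  lift conj g u₀ to ℝ using ⟨ne_top_of_le_ne_top (EReal.coe_ne_top α) hα,
    conj_ne_bot hproper.2⟩ with a ha
  have haα : a ≤ α := EReal.coe_le_coe_iff.1 hα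
  set ε := (u₀ x - a - c) / 3 with hε
  have hε₀ : 0 < ε := by linarith
  obtain ⟨z, gz, hgz, hz⟩ := exists_lt_coe_sub_of_lt_conj hproper.1 (u := u₀) (r := a - ε)
    (by rw [← ha]; exact_mod_cast sub_lt_self a hε₀)
  set κ := ε / (‖x - z‖ + 1)
  have hκ : 0 < κ := by positivity
  obtain ⟨z', w, hw, hsub, hz'⟩ := exists_mem_subdiff_near hlsc hconv u₀ hgz hκ
    (ε := ε) (by rw [← ha]; exact_mod_cast (by linarith : a ≤ u₀ z - gz + ε))
  obtain ⟨gz', hgz'⟩ := exists_eq_coe_of_mem_subdiff hsub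
  have hconj := (mem_subdiff_iff_conj_le hgz').1 hsub
  have hcx : (u₀ - w) x - ((u₀ - w) z' - gz') ≤ c := by
    have := (EReal.sub_le_sub le_rfl hconj).trans (hx _ (Set.mem_iUnion.2 ⟨z', hsub⟩))
    exact_mod_cast this
  have hgz'a : u₀ z' - gz' ≤ a := by
    have := ha ▸ coe_sub_le_conj g u₀ z'
    rw [hgz'] at this
    exact_mod_cast this
  have hwx : w (x - z') ≤ 2 * ε := by
    have hxz : κ * ‖x - z‖ ≤ ε := by
      rw [div_mul_eq_mul_div, div_le_iff₀ (by positivity)]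
      nlinarith
    calc w (x - z') ≤ ‖w‖ * ‖x - z'‖ := (le_abs_self _).trans (w.le_opNorm _)
      _ ≤ κ * (‖x - z‖ + ‖z' - z‖) := by
        gcongr
        exact norm_sub_le_norm_sub_add_norm_sub x z z' |>.trans_eq (by rw [norm_sub_rev z])
      _ ≤ 2 * ε := by linarith
  simp only [sub_apply, map_sub] at hcx hwx
  linarith

end Linearization

theorem stmt_18_general {T : Type*}
    {X : Type*} [NormedAddCommGroup X] [NormedSpace ℝ X] [CompleteSpace X]
    (f : T → X → EReal)
    (hproper : ∀ t, ErealProper (f t))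
    (hlsc : ∀ t, LowerSemicontinuous (f t))
    (hconv : ∀ t, ErealConvexOn (f t))
    (p : Linf T) :
    feas f p = {x : X | ∀ t : T, ∀ u ∈ ⋃ y : X, subdiff (f t) y,
      (u x : EReal) - conj (f t) u ≤ ((p t : ℝ) : EReal)} := by
  ext x
  exact ⟨fun hx t u _ => (coe_sub_conj_le (f t) u x).trans (hx t),
    fun hx t => le_coe_of_forall_mem_range_subdiff (hproper t) (hlsc t) (hconv t) (hx t)⟩

theorem stmt_18 {T : Type*} [Nonempty T]
    {X : Type*} [NormedAddCommGroup X] [NormedSpace ℝ X] [CompleteSpace X]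
    (f : T → X → EReal)
    (hproper : ∀ t, ErealProper (f t))
    (hlsc : ∀ t, LowerSemicontinuous (f t))
    (hconv : ∀ t, ErealConvexOn (f t))
    (p : Linf T) :
    feas f p = {x : X | ∀ t : T, ∀ u ∈ ⋃ y : X, subdiff (f t) y,
      (u x : EReal) - conj (f t) u ≤ ((p t : ℝ) : EReal)} :=
  stmt_18_general f hproper hlsc hconv p
end
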